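/- arXiv:2009.14692 — 7 statements merged into one kernel-verified Lean document; each statement's English description precedes it below -/
import Mathlib

section
/- Let H be a Hilbert space, C : dom(C) ⊆ H → H quasi-m-accretive, and α ∈ L(H) with α[dom(C)] ⊆ dom(C) such that the commutator [α,C] := αC − Cα (on dom(C)) is continuous. Then for all sufficiently small η ≥ 0, the commutator of the resolvent satisfies [(1+ηC)⁻¹, α] = η (1+ηC)⁻¹ cl([α,C]) (1+ηC)⁻¹. In particular, [(1+ηC)⁻¹, α] → 0 in operator norm as η → 0+. -/
open Filter Topology

noncomputable section

/-- `Rη` is the resolvent `(1 + η C)⁻¹` of the (generally unbounded) operator `C`. -/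
def IsResolvent {H : Type*} [NormedAddCommGroup H] [InnerProductSpace ℝ H]
    (C : H →ₗ.[ℝ] H) (η : ℝ) (Rη : H →L[ℝ] H) : Prop :=
  (∀ x : C.domain, Rη ((x : H) + η • C x) = x) ∧
  (∀ y : H, ∃ h : Rη y ∈ C.domain, Rη y + η • C ⟨Rη y, h⟩ = y)

/-- `C` is quasi-m-accretive, witnessed by the resolvent family `Res` on `[0, η₀]`. -/
def IsQuasiMAccretiveWith {H : Type*} [NormedAddCommGroup H] [InnerProductSpace ℝ H]
    (C : H →ₗ.[ℝ] H) (Res : ℝ → H →L[ℝ] H) (η₀ M : ℝ) : Prop :=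
  0 < η₀ ∧ ∀ η ∈ Set.Icc (0 : ℝ) η₀, IsResolvent C η (Res η) ∧ ‖Res η‖ ≤ M

open ContinuousLinearMap

/- Write `y = x + η C x` with `x = (1 + ηC)⁻¹ y ∈ dom C`. Since `α x ∈ dom C`,
`α y = (α x + η C (α x)) + η T x`, and applying `(1 + ηC)⁻¹` gives the formula. The resolvents
are uniformly bounded near `0`, so the commutator is `η` times a bounded operator. -/

namespace IsResolvent

variable {H : Type*} [NormedAddCommGroup H] [InnerProductSpace ℝ H]
  {C : H →ₗ.[ℝ] H} {η : ℝ} {R : H →L[ℝ] H}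

theorem comp_sub_comp_eq_smul (hR : IsResolvent C η R) {α T : H →L[ℝ] H}
    (hα : ∀ x ∈ C.domain, α x ∈ C.domain)
    (hT : ∀ x : C.domain, T (x : H) = α (C x) - C ⟨α x, hα x x.2⟩) :
    R.comp α - α.comp R = η • R.comp (T.comp R) := by
  ext y
  obtain ⟨hx, hy⟩ := hR.2 y
  set x : C.domain := ⟨R y, hx⟩
  have hαx : α x ∈ C.domain := hα x x.2
  have hαy : α y = (α x + η • C ⟨α x, hαx⟩) + η • T x := by
    rw [hT x, ← hy, map_add, map_smul, smul_sub]
    abel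
  simp only [sub_apply, comp_apply, smul_apply]
  rw [hαy, map_add, map_smul, hR.1 ⟨α x, hαx⟩]
  abel

end IsResolvent

theorem IsQuasiMAccretiveWith.eventually_nhdsGT_zero {H : Type*} [NormedAddCommGroup H]
    [InnerProductSpace ℝ H] {C : H →ₗ.[ℝ] H} {Res : ℝ → H →L[ℝ] H} {η₀ M : ℝ}
    (hq : IsQuasiMAccretiveWith C Res η₀ M) :
    ∀ᶠ η in 𝓝[>] 0, η ∈ Set.Icc 0 η₀ ∧ IsResolvent C η (Res η) ∧ ‖Res η‖ ≤ M := by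
  filter_upwards [Ioc_mem_nhdsGT hq.1] with η hη
  exact ⟨Set.Ioc_subset_Icc_self hη, hq.2 η (Set.Ioc_subset_Icc_self hη)⟩

theorem ContinuousLinearMap.norm_comp_comp_le_of_norm_le {E : Type*} [SeminormedAddCommGroup E]
    [NormedSpace ℝ E] {R T : E →L[ℝ] E} {M : ℝ} (hR : ‖R‖ ≤ M) :
    ‖R.comp (T.comp R)‖ ≤ M * (‖T‖ * M) :=
  calc ‖R.comp (T.comp R)‖ ≤ ‖R‖ * (‖T‖ * ‖R‖) :=
        (opNorm_comp_le _ _).trans (by gcongr; exact opNorm_comp_le _ _)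
    _ ≤ M * (‖T‖ * M) := by gcongr; exact (norm_nonneg R).trans hR

theorem resolvent_commutator_formula_general
    {H : Type*} [NormedAddCommGroup H] [InnerProductSpace ℝ H]
    (C : H →ₗ.[ℝ] H)
    (Res : ℝ → H →L[ℝ] H) (η₀ M : ℝ)
    (hq : IsQuasiMAccretiveWith C Res η₀ M)
    (α : H →L[ℝ] H) (hα : ∀ x ∈ C.domain, α x ∈ C.domain)
    (T : H →L[ℝ] H)
    (hT : ∀ x : C.domain, T (x : H) = α (C x) - C ⟨α x, hα x x.2⟩) :
    (∀ η ∈ Set.Icc (0 : ℝ) η₀,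
        (Res η).comp α - α.comp (Res η) = η • ((Res η).comp (T.comp (Res η)))) ∧
      Tendsto (fun η : ℝ => ‖(Res η).comp α - α.comp (Res η)‖) (𝓝[>] (0 : ℝ)) (𝓝 0) := by
  have hformula : ∀ η ∈ Set.Icc (0 : ℝ) η₀,
      (Res η).comp α - α.comp (Res η) = η • ((Res η).comp (T.comp (Res η))) :=
    fun η hη => (hq.2 η hη).1.comp_sub_comp_eq_smul hα hT
  refine ⟨hformula, ?_⟩
  have hbdd : IsBoundedUnder (· ≤ ·) (𝓝[>] 0) fun η => ‖(Res η).comp (T.comp (Res η))‖ :=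
    isBoundedUnder_of_eventually_le <| hq.eventually_nhdsGT_zero.mono
      fun η hη => norm_comp_comp_le_of_norm_le hη.2.2
  have hsmul := (tendsto_nhdsWithin_of_tendsto_nhds tendsto_id).zero_smul_isBoundedUnder_le hbdd
  refine (tendsto_zero_iff_norm_tendsto_zero.1 hsmul).congr' ?_
  filter_upwards [hq.eventually_nhdsGT_zero] with η hη
  rw [hformula η hη.1]
  rfl

/-- for a quasi-m-accretive `C` and bounded `α` leaving `dom C` invariant with
continuous commutator `[α,C]` (continuous extension `T`), one has
`[(1+ηC)⁻¹, α] = η (1+ηC)⁻¹ cl([α,C]) (1+ηC)⁻¹` for small `η ≥ 0`, and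
`[(1+ηC)⁻¹, α] → 0` in operator norm as `η → 0+`. -/
theorem resolvent_commutator_formula
    {H : Type*} [NormedAddCommGroup H] [InnerProductSpace ℝ H] [CompleteSpace H]
    (C : H →ₗ.[ℝ] H) (hdense : Dense (C.domain : Set H)) (hclosed : C.IsClosed)
    (Res : ℝ → H →L[ℝ] H) (η₀ M : ℝ)
    (hq : IsQuasiMAccretiveWith C Res η₀ M)
    (α : H →L[ℝ] H) (hα : ∀ x ∈ C.domain, α x ∈ C.domain)
    (T : H →L[ℝ] H)
    (hT : ∀ x : C.domain, T (x : H) = α (C x) - C ⟨α x, hα x x.2⟩) :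
    (∀ η ∈ Set.Icc (0 : ℝ) η₀,
        (Res η).comp α - α.comp (Res η) = η • ((Res η).comp (T.comp (Res η)))) ∧
      Tendsto (fun η : ℝ => ‖(Res η).comp α - α.comp (Res η)‖) (𝓝[>] (0 : ℝ)) (𝓝 0) :=
  resolvent_commutator_formula_general C Res η₀ M hq α hα T hT
end
end

section
/- Let H be a Hilbert space, C quasi-m-accretive on H, and α ∈ L(H) with α[dom(C)] ⊆ dom(C) and [α,C] continuous. Then C[(1+ηC)⁻¹, α] extends to a bounded operator on H, equal to cl([α,C])(1+ηC)⁻¹ − (1+ηC)⁻¹ cl([α,C])(1+ηC)⁻¹ for small η ≥ 0, and this operator converges strongly to 0 as η → 0+. -/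
open Filter Topology

noncomputable section

lemma res_tendsto {H : Type*} [NormedAddCommGroup H] [InnerProductSpace ℝ H]
    (C : H →ₗ.[ℝ] H) (hdense : Dense (C.domain : Set H))
    (Res : ℝ → H →L[ℝ] H) (η₀ M : ℝ)
    (hq : IsQuasiMAccretiveWith C Res η₀ M) (z : H) :
    Tendsto (fun η : ℝ => Res η z) (𝓝[>] (0:ℝ)) (𝓝 z) := by
  obtain ⟨hη₀, hq⟩ := hq
  have hM : (0:ℝ) ≤ M := le_trans (norm_nonneg _) (hq 0 ⟨le_refl 0, le_of_lt hη₀⟩).2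
  rw [Metric.tendsto_nhds]
  intro ε hε
  have hpos : 0 < ε / (2*(M+1)) := by positivity
  obtain ⟨x, hx, hdist⟩ := hdense.exists_dist_lt z hpos
  set xd : C.domain := ⟨x, hx⟩ with hxd
  set δ : ℝ := ε / (2*(M*‖C xd‖+1)) with hδ
  have hδpos : 0 < δ := by positivity
  have hmem : Set.Ioo (0:ℝ) (min η₀ δ) ∈ 𝓝[>] (0:ℝ) :=
    Ioo_mem_nhdsGT_of_mem ⟨le_refl 0, lt_min hη₀ hδpos⟩
  filter_upwards [hmem] with η hηm
  obtain ⟨hη1, hη2⟩ := hηm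
  have hηIcc : η ∈ Set.Icc (0:ℝ) η₀ := ⟨le_of_lt hη1, le_of_lt (lt_of_lt_of_le hη2 (min_le_left _ _))⟩
  obtain ⟨hres, hnorm⟩ := hq η hηIcc
  have h1 : Res η ((x:H) + η • C xd) = x := hres.1 xd
  have hxx : Res η x - x = -(η • Res η (C xd)) := by
    calc Res η x - x = Res η x - Res η ((x:H) + η • C xd) := by rw [h1]
      _ = -(η • Res η (C xd)) := by rw [map_add, map_smul]; abel
  have hb1 : ‖Res η x - x‖ ≤ η * (M * ‖C xd‖) := by
    rw [hxx, norm_neg, norm_smul, Real.norm_eq_abs, abs_of_pos hη1]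
    have := (Res η).le_opNorm (C xd)
    have h2 : ‖Res η (C xd)‖ ≤ M * ‖C xd‖ :=
      le_trans this (mul_le_mul_of_nonneg_right hnorm (norm_nonneg _))
    exact mul_le_mul_of_nonneg_left h2 (le_of_lt hη1)
  have hb2 : ‖Res η (z - x)‖ ≤ M * ‖z - x‖ :=
    le_trans ((Res η).le_opNorm _) (mul_le_mul_of_nonneg_right hnorm (norm_nonneg _))
  have hsplit : Res η z - z = Res η (z - x) + (Res η x - x) + (x - z) := by
    rw [map_sub]; abel
  have hbound : dist (Res η z) z ≤ M * ‖z - x‖ + η * (M * ‖C xd‖) + ‖z - x‖ := by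
    rw [dist_eq_norm, hsplit]
    calc ‖Res η (z - x) + (Res η x - x) + (x - z)‖
        ≤ ‖Res η (z - x)‖ + ‖Res η x - x‖ + ‖x - z‖ := norm_add₃_le
      _ ≤ M * ‖z - x‖ + η * (M * ‖C xd‖) + ‖z - x‖ := by
          rw [norm_sub_rev x z]; exact add_le_add (add_le_add hb2 hb1) le_rfl
  have hzx : ‖z - x‖ < ε / (2*(M+1)) := by rwa [← dist_eq_norm]
  have half1 : M * ‖z - x‖ + ‖z - x‖ < ε / 2 := by
    have : (M+1) * ‖z - x‖ < (M+1) * (ε / (2*(M+1))) :=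
      mul_lt_mul_of_pos_left hzx (by positivity)
    have heq : (M+1) * (ε / (2*(M+1))) = ε / 2 := by field_simp
    nlinarith [norm_nonneg (z - x)]
  have half2 : η * (M * ‖C xd‖) < ε / 2 := by
    have hηδ : η < δ := lt_of_lt_of_le hη2 (min_le_right _ _)
    have : η * (M * ‖C xd‖) ≤ η * (M * ‖C xd‖ + 1) := by nlinarith
    have h3 : η * (M * ‖C xd‖ + 1) < δ * (M * ‖C xd‖ + 1) := by
      apply mul_lt_mul_of_pos_right hηδ
      positivity
    have heq : δ * (M * ‖C xd‖ + 1) = ε / 2 := by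
      rw [hδ]; field_simp
    linarith
  calc dist (Res η z) z ≤ M * ‖z - x‖ + η * (M * ‖C xd‖) + ‖z - x‖ := hbound
    _ < ε := by linarith

/-- `C[(1+ηC)⁻¹, α]` extends to a bounded operator, equal to
`cl([α,C])(1+ηC)⁻¹ - (1+ηC)⁻¹ cl([α,C])(1+ηC)⁻¹` for small `η ≥ 0`, and this
converges strongly to `0` as `η → 0+`. -/
theorem C_resolvent_commutator_bounded_and_tendsto_zero
    {H : Type*} [NormedAddCommGroup H] [InnerProductSpace ℝ H] [CompleteSpace H]
    (C : H →ₗ.[ℝ] H) (hdense : Dense (C.domain : Set H)) (hclosed : C.IsClosed)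
    (Res : ℝ → H →L[ℝ] H) (η₀ M : ℝ)
    (hq : IsQuasiMAccretiveWith C Res η₀ M)
    (α : H →L[ℝ] H) (hα : ∀ x ∈ C.domain, α x ∈ C.domain)
    (T : H →L[ℝ] H)
    (hT : ∀ x : C.domain, T (x : H) = α (C x) - C ⟨α x, hα x x.2⟩) :
    (∀ η ∈ Set.Icc (0 : ℝ) η₀, ∀ y : H,
        ∃ h : ((Res η).comp α - α.comp (Res η)) y ∈ C.domain,
          C ⟨((Res η).comp α - α.comp (Res η)) y, h⟩ =
            T (Res η y) - Res η (T (Res η y))) ∧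
      ∀ y : H,
        Tendsto (fun η : ℝ => T (Res η y) - Res η (T (Res η y))) (𝓝[>] (0 : ℝ)) (𝓝 0) := by
  constructor
  · intro η hη y
    obtain ⟨hres, _⟩ := hq.2 η hη
    obtain ⟨hu, hueq⟩ := hres.2 y
    obtain ⟨hw, hweq⟩ := hres.2 (T (Res η y))
    have hau : α (Res η y) ∈ C.domain := hα _ hu
    have hTu : T (Res η y) = α (C ⟨Res η y, hu⟩) - C ⟨α (Res η y), hau⟩ := hT ⟨Res η y, hu⟩
    have h1 : α y = (α (Res η y) + η • C ⟨α (Res η y), hau⟩) + η • T (Res η y) := by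
      calc α y = α (Res η y + η • C ⟨Res η y, hu⟩) := by rw [hueq]
        _ = α (Res η y) + η • α (C ⟨Res η y, hu⟩) := by rw [map_add, map_smul]
        _ = α (Res η y) + η • (T (Res η y) + C ⟨α (Res η y), hau⟩) := by
            rw [hTu]; congr 1; rw [sub_add_cancel]
        _ = _ := by rw [smul_add]; abel
    have h2 : Res η ((α (Res η y) : H) + η • C ⟨α (Res η y), hau⟩) = α (Res η y) :=
      hres.1 ⟨α (Res η y), hau⟩
    have key : ((Res η).comp α - α.comp (Res η)) y = η • Res η (T (Res η y)) := by
      have : Res η (α y) = α (Res η y) + η • Res η (T (Res η y)) := by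
        rw [h1, map_add, map_smul, h2]
      simp only [ContinuousLinearMap.sub_apply, ContinuousLinearMap.comp_apply, this]
      abel
    have hmem : ((Res η).comp α - α.comp (Res η)) y ∈ C.domain := by
      rw [key]; exact C.domain.smul_mem η hw
    refine ⟨hmem, ?_⟩
    have hsub : (⟨((Res η).comp α - α.comp (Res η)) y, hmem⟩ : C.domain)
        = η • (⟨Res η (T (Res η y)), hw⟩ : C.domain) := Subtype.ext (by simpa using key)
    rw [hsub, C.map_smul]
    have : η • C ⟨Res η (T (Res η y)), hw⟩ = T (Res η y) - Res η (T (Res η y)) :=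
      eq_sub_of_add_eq' hweq
    exact this
  · intro y
    have hF : Tendsto (fun η : ℝ => T (Res η y)) (𝓝[>] (0:ℝ)) (𝓝 (T y)) :=
      (T.continuous.tendsto y).comp (res_tendsto C hdense Res η₀ M hq y)
    have hG : Tendsto (fun η : ℝ => Res η (T (Res η y)) - T y) (𝓝[>] (0:ℝ)) (𝓝 0) := by
      have hM : (0:ℝ) ≤ M :=
        le_trans (norm_nonneg _) ((hq.2 0 ⟨le_refl 0, le_of_lt hq.1⟩).2)
      have hRTy : Tendsto (fun η : ℝ => Res η (T y) - T y) (𝓝[>] (0:ℝ)) (𝓝 0) := by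
        rw [← sub_self (T y)]
        exact (res_tendsto C hdense Res η₀ M hq (T y)).sub tendsto_const_nhds
      have hF0 : Tendsto (fun η : ℝ => ‖T (Res η y) - T y‖) (𝓝[>] (0:ℝ)) (𝓝 0) := by
        have h := (hF.sub (tendsto_const_nhds (x := T y))).norm
        simpa using h
      have hg : Tendsto (fun η : ℝ => M * ‖T (Res η y) - T y‖ + ‖Res η (T y) - T y‖)
          (𝓝[>] (0:ℝ)) (𝓝 0) := by
        have := (hF0.const_mul M).add hRTy.norm
        simpa using this
      apply squeeze_zero_norm' _ hg
      have hIoo : Set.Ioo (0:ℝ) η₀ ∈ 𝓝[>] (0:ℝ) :=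
        Ioo_mem_nhdsGT_of_mem ⟨le_refl 0, hq.1⟩
      filter_upwards [hIoo] with η hηm
      have hηIcc : η ∈ Set.Icc (0:ℝ) η₀ := ⟨le_of_lt hηm.1, le_of_lt hηm.2⟩
      have hnorm := (hq.2 η hηIcc).2
      have hsplit : Res η (T (Res η y)) - T y
          = Res η (T (Res η y) - T y) + (Res η (T y) - T y) := by
        rw [map_sub]; abel
      rw [hsplit]
      calc ‖Res η (T (Res η y) - T y) + (Res η (T y) - T y)‖
          ≤ ‖Res η (T (Res η y) - T y)‖ + ‖Res η (T y) - T y‖ := norm_add_le _ _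
        _ ≤ M * ‖T (Res η y) - T y‖ + ‖Res η (T y) - T y‖ := by
            gcongr
            exact le_trans ((Res η).le_opNorm _)
              (mul_le_mul_of_nonneg_right hnorm (norm_nonneg _))
    have h := (hF.sub (tendsto_const_nhds (x := T y))).sub hG
    simpa using h
end
end

section
/- Let H be a Hilbert space, C : dom(C) ⊆ H → H densely defined and closed, and α ∈ L(H) with α[dom(C)] ⊆ dom(C) and [α,C] continuous. Then α* leaves dom(C*) invariant and the adjoint of the commutator satisfies [α,C]* = cl([C*, α*]). -/
/-!
For `v ∈ dom C*` and `x ∈ dom C`, writing `α C x = T x + C (α x)` gives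
`⟪α* v, C x⟫ = ⟪T* v, x⟫ + ⟪C* v, α x⟫ = ⟪T* v + α* C* v, x⟫`,
so `α* v ∈ dom C*` and `C* α* v = T* v + α* C* v`.

Density of `dom C*` is von Neumann's: if `v ⊥ dom C*`, then `(0, v)` is orthogonal to the
orthogonal complement of the graph of `C` (in `H × H` with the `ℓ²` inner product), hence
lies in the closed graph, so `v = 0`.
-/

open scoped InnerProductSpace

namespace LinearPMap

variable {𝕜 E F : Type*} [RCLike 𝕜] [NormedAddCommGroup E] [InnerProductSpace 𝕜 E]
  [NormedAddCommGroup F] [InnerProductSpace 𝕜 F] [CompleteSpace E]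

theorem snd_mem_adjoint_domain_of_mem_graph_orthogonal (T : E →ₗ.[𝕜] F)
    {w : WithLp 2 (E × F)}
    (hw : w ∈ (T.graph.comap (WithLp.linearEquiv 2 𝕜 (E × F)).toLinearMap)ᗮ) :
    w.snd ∈ T†.domain := by
  refine mem_adjoint_domain_of_exists _ ⟨-w.fst, fun x => ?_⟩
  have hx := Submodule.inner_left_of_mem_orthogonal
    (u := WithLp.toLp 2 ((x : E), T x)) (by simp) hw
  rw [WithLp.prod_inner_apply] at hx
  rw [inner_neg_left]
  exact neg_eq_of_add_eq_zero_right hx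

theorem dense_adjoint_domain [CompleteSpace F] {T : E →ₗ.[𝕜] F}
    (hT : T.IsClosed) : Dense (T†.domain : Set F) := by
  rw [Submodule.dense_iff_topologicalClosure_eq_top, Submodule.topologicalClosure_eq_top_iff,
    Submodule.eq_bot_iff]
  intro v hv
  set G := T.graph.comap (WithLp.linearEquiv 2 𝕜 (E × F)).toLinearMap
  have hG : _root_.IsClosed (G : Set (WithLp 2 (E × F))) :=
    hT.preimage (WithLp.prod_continuous_ofLp 2 E F)
  have h0v : WithLp.toLp 2 ((0 : E), v) ∈ Gᗮᗮ := by
    rw [Submodule.mem_orthogonal]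
    intro w hw
    rw [WithLp.prod_inner_apply]
    simp [Submodule.inner_right_of_mem_orthogonal
      (snd_mem_adjoint_domain_of_mem_graph_orthogonal T hw) hv]
  rw [Submodule.orthogonal_orthogonal_eq_closure, hG.submodule_topologicalClosure_eq] at h0v
  exact T.graph_fst_eq_zero_snd h0v rfl

section Intertwiner

variable [CompleteSpace F] {T : E →ₗ.[𝕜] F} (hT : Dense (T.domain : Set E))
  (α : F →L[𝕜] F) {β : E →L[𝕜] E}
  (hβ : ∀ x ∈ T.domain, β x ∈ T.domain) {D : E →L[𝕜] F}

include hT hβ in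
theorem inner_intertwiner_adjoint
    (hD : ∀ x : T.domain, D x = α (T x) - T ⟨β x, hβ x x.2⟩) (v : T†.domain)
    (x : T.domain) :
    ⟪D.adjoint v + β.adjoint (T† v), x⟫_𝕜 = ⟪α.adjoint v, T x⟫_𝕜 := by
  have hαT : α (T x) = D x + T ⟨β x, hβ x x.2⟩ := by rw [hD x, sub_add_cancel]
  rw [inner_add_left, ContinuousLinearMap.adjoint_inner_left,
    ContinuousLinearMap.adjoint_inner_left, ContinuousLinearMap.adjoint_inner_left, hαT,
    inner_add_right, adjoint_isFormalAdjoint hT v ⟨β x, hβ x x.2⟩]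

include hT in
theorem adjoint_mem_adjoint_domain_of_intertwiner
    (hD : ∀ x : T.domain, D x = α (T x) - T ⟨β x, hβ x x.2⟩) (v : T†.domain) :
    α.adjoint v ∈ T†.domain :=
  mem_adjoint_domain_of_exists _ ⟨_, inner_intertwiner_adjoint hT α hβ hD v⟩

include hT in
theorem adjoint_apply_adjoint_of_intertwiner
    (hD : ∀ x : T.domain, D x = α (T x) - T ⟨β x, hβ x x.2⟩) (v : T†.domain)
    (h : α.adjoint v ∈ T†.domain) :
    T† ⟨α.adjoint v, h⟩ = D.adjoint v + β.adjoint (T† v) :=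
  adjoint_apply_eq hT _ (inner_intertwiner_adjoint hT α hβ hD v)

end Intertwiner

end LinearPMap

/-- for `C` densely defined and closed and bounded `α` leaving `dom C`
invariant with continuous commutator `[α,C]` (continuous extension `T`), the adjoint `α*`
leaves `dom C*` invariant and `[α,C]* = cl([C*, α*])`, i.e. the bounded operator `T*`
agrees on the (dense) domain of `C*` with `C*α* - α*C*`. -/
theorem adjoint_commutator_eq
    {H : Type*} [NormedAddCommGroup H] [InnerProductSpace ℝ H] [CompleteSpace H]
    (C : H →ₗ.[ℝ] H) (hdense : Dense (C.domain : Set H)) (hclosed : C.IsClosed)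
    (α : H →L[ℝ] H) (hα : ∀ x ∈ C.domain, α x ∈ C.domain)
    (T : H →L[ℝ] H)
    (hT : ∀ x : C.domain, T (x : H) = α (C x) - C ⟨α x, hα x x.2⟩) :
    Dense (C.adjoint.domain : Set H) ∧
      ∀ v : C.adjoint.domain,
        ∃ h : ContinuousLinearMap.adjoint α (v : H) ∈ C.adjoint.domain,
          ContinuousLinearMap.adjoint T (v : H) =
            C.adjoint ⟨ContinuousLinearMap.adjoint α (v : H), h⟩ -
              ContinuousLinearMap.adjoint α (C.adjoint v) := by
  refine ⟨LinearPMap.dense_adjoint_domain hclosed, fun v => ?_⟩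
  have h := LinearPMap.adjoint_mem_adjoint_domain_of_intertwiner hdense α hα hT v
  refine ⟨h, ?_⟩
  rw [LinearPMap.adjoint_apply_adjoint_of_intertwiner hdense α hα hT v h, add_sub_cancel_right]
end

section
/- Let H₀, H₁ be Hilbert spaces, C and D densely defined closed operators from H₀ to H₁ such that dom(C) ∩ dom(D) is dense. Let R ∈ L(H₀), L ∈ L(H₁) with R[dom(C)∩dom(D)] ⊆ dom(C)∩dom(D), where C+D has domain dom(C)∩dom(D), and assume the transmutator [L, C+D, R] = L(C+D) − (C+D)R is continuous. Then L*[dom((C+D)*)] ⊆ dom((C+D)*) and [R*, (C+D)*, L*] ⊆ −[L, C+D, R]*. -/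
open Filter Topology RealInnerProductSpace

noncomputable section

/-- let `C, D` be densely intersecting closed operators, `L, R` bounded with
`R` leaving `dom(C) ∩ dom(D)` invariant and the transmutator `[L, C+D, R]` continuous (with
continuous extension `T`). Then `L*` leaves `dom((C+D)*)` invariant and
`[R*, (C+D)*, L*] ⊆ -[L, C+D, R]*`. -/
theorem adjoint_transmutator_sum
    {H₀ H₁ : Type*}
    [NormedAddCommGroup H₀] [InnerProductSpace ℝ H₀] [CompleteSpace H₀]
    [NormedAddCommGroup H₁] [InnerProductSpace ℝ H₁] [CompleteSpace H₁]
    (C D : H₀ →ₗ.[ℝ] H₁) (hC : C.IsClosed) (hD : D.IsClosed)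
    (hCdense : Dense (C.domain : Set H₀)) (hDdense : Dense (D.domain : Set H₀))
    (hdense : Dense (((C + D).domain : Submodule ℝ H₀) : Set H₀))
    (L : H₁ →L[ℝ] H₁) (R : H₀ →L[ℝ] H₀)
    (hR : ∀ x ∈ (C + D).domain, R x ∈ (C + D).domain)
    (T : H₀ →L[ℝ] H₁)
    (hT : ∀ x : (C + D).domain, T (x : H₀) = L ((C + D) x) - (C + D) ⟨R x, hR x x.2⟩) :
    ∀ v : (C + D).adjoint.domain,
      ∃ h : ContinuousLinearMap.adjoint L (v : H₁) ∈ (C + D).adjoint.domain,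
        ContinuousLinearMap.adjoint R ((C + D).adjoint v) -
            (C + D).adjoint ⟨ContinuousLinearMap.adjoint L (v : H₁), h⟩ =
          -(ContinuousLinearMap.adjoint T (v : H₁)) := by
  intro v
  have key : ∀ x : (C + D).domain,
      ⟪ContinuousLinearMap.adjoint T (v : H₁) +
        ContinuousLinearMap.adjoint R ((C + D).adjoint v), (x : H₀)⟫ =
      ⟪(ContinuousLinearMap.adjoint L (v : H₁)), (C + D) x⟫ := by
    intro x
    have h1 : ⟪(ContinuousLinearMap.adjoint L (v : H₁)), (C + D) x⟫
        = ⟪(v : H₁), L ((C + D) x)⟫ := by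
      rw [ContinuousLinearMap.adjoint_inner_left]
    have h2 : L ((C + D) x) = T (x : H₀) + (C + D) ⟨R x, hR x x.2⟩ := by
      rw [hT x]; abel
    have h3 : ⟪(v : H₁), (C + D) ⟨R x, hR x x.2⟩⟫
        = ⟪ContinuousLinearMap.adjoint R ((C + D).adjoint v), (x : H₀)⟫ := by
      have hfa := (LinearPMap.adjoint_isFormalAdjoint hdense (T := C + D)) v ⟨R x, hR x x.2⟩
      rw [← hfa, ContinuousLinearMap.adjoint_inner_left]
    have h4 : ⟪(v : H₁), T (x : H₀)⟫
        = ⟪ContinuousLinearMap.adjoint T (v : H₁), (x : H₀)⟫ := by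
      rw [ContinuousLinearMap.adjoint_inner_left]
    rw [h1, h2, inner_add_right, h3, h4, inner_add_left]
  have h : ContinuousLinearMap.adjoint L (v : H₁) ∈ (C + D).adjoint.domain :=
    LinearPMap.mem_adjoint_domain_of_exists _ ⟨_, key⟩
  refine ⟨h, ?_⟩
  have heq : (C + D).adjoint ⟨ContinuousLinearMap.adjoint L (v : H₁), h⟩ =
      ContinuousLinearMap.adjoint T (v : H₁) +
        ContinuousLinearMap.adjoint R ((C + D).adjoint v) :=
    LinearPMap.adjoint_apply_eq hdense _ key
  rw [heq]
  abel
end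
end

section
/- Let H₀, H₁ be Hilbert spaces, C and D densely defined closed operators from H₀ to H₁ with dom(C) ∩ dom(D) dense. For each n ∈ ℕ let Lₙ ∈ L(H₁), Rₙ ∈ L(H₀) with Rₙ[dom(C)∩dom(D)] ⊆ dom(C)∩dom(D) and [Lₙ, C+D, Rₙ] continuous. Assume (C+D)* Lₙ* = (C* + D*) Lₙ* for each n, that Rₙ* → 1 and Lₙ* → 1 strongly, and that [Lₙ, C+D, Rₙ]* → 0 strongly as n → ∞. Then cl(C* + D*) = (C+D)*. -/
/-!
`C* + D* ⊆ (C+D)*` always, and `(C+D)*` is closed, so only density of the graph of `C* + D*` in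
that of `(C+D)*` is at stake. For `v ∈ dom((C+D)*)`, taking adjoints in
`Lₙ (C+D) = Tₙ + (C+D) Rₙ` gives `Lₙ* v ∈ dom((C+D)*)` with `(C+D)* Lₙ* v = Tₙ* v + Rₙ* (C+D)* v`;
by hypothesis this is a point `(Lₙ* v, Tₙ* v + Rₙ* (C+D)* v)` of the graph of `C* + D*`, and it
tends to `(v, (C+D)* v)`.
-/

open Filter Topology

namespace LinearPMap

section Closure

variable {R E F : Type*} [CommRing R] [TopologicalSpace R]
  [AddCommGroup E] [Module R E] [TopologicalSpace E] [ContinuousAdd E] [ContinuousSMul R E]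
  [AddCommGroup F] [Module R F] [TopologicalSpace F] [ContinuousAdd F] [ContinuousSMul R F]

theorem IsClosed.closure_eq {f : E →ₗ.[R] F} (hf : f.IsClosed) : f.closure = f := by
  refine le_antisymm (le_of_le_graph ?_) f.le_closure
  rw [← hf.isClosable.graph_closure_eq_closure_graph,
    _root_.IsClosed.submodule_topologicalClosure_eq hf]

theorem closure_eq_of_le_of_mem_closure_graph {f g : E →ₗ.[R] F} (hg : g.IsClosed) (hfg : f ≤ g)
    (hgraph : ∀ y : g.domain, ((y : E), g y) ∈ f.graph.topologicalClosure) : f.closure = g := by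
  refine le_antisymm (hg.closure_eq ▸ hg.isClosable.closure_mono hfg) (le_of_le_graph ?_)
  rw [← (hg.isClosable.leIsClosable hfg).graph_closure_eq_closure_graph]
  intro p hp
  obtain ⟨y, hy₁, hy₂⟩ := (mem_graph_iff g).1 hp
  exact (Prod.ext hy₁ hy₂ : ((y : E), g y) = p) ▸ hgraph y

end Closure

variable {𝕜 E F : Type*} [RCLike 𝕜]
  [NormedAddCommGroup E] [InnerProductSpace 𝕜 E] [NormedAddCommGroup F] [InnerProductSpace 𝕜 F]

theorem IsFormalAdjoint.add {C D : E →ₗ.[𝕜] F} {C' D' : F →ₗ.[𝕜] E}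
    (hC : C.IsFormalAdjoint C') (hD : D.IsFormalAdjoint D') :
    (C + D).IsFormalAdjoint (C' + D') := fun x y => by
  change inner 𝕜 (C ⟨x, x.2.1⟩ + D ⟨x, x.2.2⟩) (y : F) =
    inner 𝕜 (x : E) (C' ⟨y, y.2.1⟩ + D' ⟨y, y.2.2⟩)
  rw [inner_add_left, inner_add_right, hC ⟨x, x.2.1⟩ ⟨y, y.2.1⟩, hD ⟨x, x.2.2⟩ ⟨y, y.2.2⟩]

variable [CompleteSpace E]

theorem add_adjoint_le_adjoint_add {C D : E →ₗ.[𝕜] F} (hC : Dense (C.domain : Set E))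
    (hD : Dense (D.domain : Set E)) (hCD : Dense ((C + D).domain : Set E)) :
    C† + D† ≤ (C + D)† :=
  ((adjoint_isFormalAdjoint hC).symm.add (adjoint_isFormalAdjoint hD).symm).le_adjoint hCD

/-- `L*` maps `dom(S*)` into itself, with `S* L* = T* + R* S*` there. -/
theorem mem_adjoint_graph_of_commutator [CompleteSpace F] {S : E →ₗ.[𝕜] F}
    (hS : Dense (S.domain : Set E)) {L : F →L[𝕜] F} {R : E →L[𝕜] E} {T : E →L[𝕜] F}
    (hR : ∀ x ∈ S.domain, R x ∈ S.domain)
    (hT : ∀ x : S.domain, T x = L (S x) - S ⟨R x, hR x x.2⟩) (v : S†.domain) :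
    (L.adjoint v, T.adjoint v + R.adjoint (S† v)) ∈ S†.graph := by
  have hinner : ∀ x : S.domain,
      inner 𝕜 (T.adjoint v + R.adjoint (S† v)) (x : E) = inner 𝕜 (L.adjoint v) (S x) := by
    intro x
    have hL : L (S x) = T x + S ⟨R x, hR x x.2⟩ := by rw [hT x, sub_add_cancel]
    rw [inner_add_left, ContinuousLinearMap.adjoint_inner_left,
      ContinuousLinearMap.adjoint_inner_left, ContinuousLinearMap.adjoint_inner_left, hL,
      inner_add_right, adjoint_isFormalAdjoint hS v ⟨R x, hR x x.2⟩]
  exact (mem_graph_iff _).2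
    ⟨⟨_, mem_adjoint_domain_of_exists _ ⟨_, hinner⟩⟩, rfl, adjoint_apply_eq hS _ hinner⟩

end LinearPMap

theorem closure_adjoint_sum_eq_adjoint_general
    {H₀ H₁ : Type*}
    [NormedAddCommGroup H₀] [InnerProductSpace ℝ H₀] [CompleteSpace H₀]
    [NormedAddCommGroup H₁] [InnerProductSpace ℝ H₁] [CompleteSpace H₁]
    (C D : H₀ →ₗ.[ℝ] H₁)
    (hCdense : Dense (C.domain : Set H₀)) (hDdense : Dense (D.domain : Set H₀))
    (hdense : Dense (((C + D).domain : Submodule ℝ H₀) : Set H₀))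
    (L : ℕ → H₁ →L[ℝ] H₁) (R : ℕ → H₀ →L[ℝ] H₀)
    (hR : ∀ n : ℕ, ∀ x ∈ (C + D).domain, R n x ∈ (C + D).domain)
    (T : ℕ → H₀ →L[ℝ] H₁)
    (hT : ∀ (n : ℕ) (x : (C + D).domain),
      T n (x : H₀) = L n ((C + D) x) - (C + D) ⟨R n x, hR n x x.2⟩)
    (hsum : ∀ (n : ℕ) (v : H₁),
      ((ContinuousLinearMap.adjoint (L n) v ∈ (C + D).adjoint.domain) ↔
        (ContinuousLinearMap.adjoint (L n) v ∈ (C.adjoint + D.adjoint).domain)) ∧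
      ∀ (h₁ : ContinuousLinearMap.adjoint (L n) v ∈ (C + D).adjoint.domain)
        (h₂ : ContinuousLinearMap.adjoint (L n) v ∈ (C.adjoint + D.adjoint).domain),
        (C + D).adjoint ⟨ContinuousLinearMap.adjoint (L n) v, h₁⟩ =
          (C.adjoint + D.adjoint) ⟨ContinuousLinearMap.adjoint (L n) v, h₂⟩)
    (hRconv : ∀ x : H₀,
      Tendsto (fun n : ℕ => ContinuousLinearMap.adjoint (R n) x) atTop (𝓝 x))
    (hLconv : ∀ v : H₁,
      Tendsto (fun n : ℕ => ContinuousLinearMap.adjoint (L n) v) atTop (𝓝 v))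
    (hTconv : ∀ v : H₁,
      Tendsto (fun n : ℕ => ContinuousLinearMap.adjoint (T n) v) atTop (𝓝 0)) :
    (C.adjoint + D.adjoint).closure = (C + D).adjoint := by
  refine LinearPMap.closure_eq_of_le_of_mem_closure_graph (LinearPMap.adjoint_isClosed hdense)
    (LinearPMap.add_adjoint_le_adjoint_add hCdense hDdense hdense) fun v => ?_
  set w := (C + D).adjoint v
  have hgraph : ∀ n, ((L n).adjoint v, (T n).adjoint v + (R n).adjoint w) ∈
      (C.adjoint + D.adjoint).graph := fun n => by
    obtain ⟨⟨_, h₁⟩, rfl, hval⟩ := (LinearPMap.mem_graph_iff _).1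
      (LinearPMap.mem_adjoint_graph_of_commutator hdense (hR n) (hT n) v)
    have h₂ := (hsum n v).1.1 h₁
    exact (LinearPMap.mem_graph_iff _).2 ⟨⟨_, h₂⟩, rfl, ((hsum n v).2 h₁ h₂).symm.trans hval⟩
  have htendsto : Tendsto (fun n => ((L n).adjoint v, (T n).adjoint v + (R n).adjoint w))
      atTop (𝓝 ((v : H₁), w)) :=
    (hLconv v).prodMk_nhds (by simpa using (hTconv v).add (hRconv w))
  rw [← SetLike.mem_coe, Submodule.topologicalClosure_coe]
  exact mem_closure_of_tendsto htendsto (Eventually.of_forall hgraph)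

/-- abstract sum theorem. With `Lₙ, Rₙ` bounded, `Rₙ` leaving
`dom(C) ∩ dom(D)` invariant, transmutators `[Lₙ, C+D, Rₙ]` continuous (extensions `Tₙ`),
`(C+D)* Lₙ* = (C*+D*) Lₙ*` (equality including domains), `Rₙ* → 1`, `Lₙ* → 1` strongly
and `[Lₙ, C+D, Rₙ]* → 0` strongly, one has `cl(C* + D*) = (C+D)*`. -/
theorem closure_adjoint_sum_eq_adjoint
    {H₀ H₁ : Type*}
    [NormedAddCommGroup H₀] [InnerProductSpace ℝ H₀] [CompleteSpace H₀]
    [NormedAddCommGroup H₁] [InnerProductSpace ℝ H₁] [CompleteSpace H₁]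
    (C D : H₀ →ₗ.[ℝ] H₁) (hC : C.IsClosed) (hD : D.IsClosed)
    (hCdense : Dense (C.domain : Set H₀)) (hDdense : Dense (D.domain : Set H₀))
    (hdense : Dense (((C + D).domain : Submodule ℝ H₀) : Set H₀))
    (L : ℕ → H₁ →L[ℝ] H₁) (R : ℕ → H₀ →L[ℝ] H₀)
    (hR : ∀ n : ℕ, ∀ x ∈ (C + D).domain, R n x ∈ (C + D).domain)
    (T : ℕ → H₀ →L[ℝ] H₁)
    (hT : ∀ (n : ℕ) (x : (C + D).domain),
      T n (x : H₀) = L n ((C + D) x) - (C + D) ⟨R n x, hR n x x.2⟩)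
    (hsum : ∀ (n : ℕ) (v : H₁),
      ((ContinuousLinearMap.adjoint (L n) v ∈ (C + D).adjoint.domain) ↔
        (ContinuousLinearMap.adjoint (L n) v ∈ (C.adjoint + D.adjoint).domain)) ∧
      ∀ (h₁ : ContinuousLinearMap.adjoint (L n) v ∈ (C + D).adjoint.domain)
        (h₂ : ContinuousLinearMap.adjoint (L n) v ∈ (C.adjoint + D.adjoint).domain),
        (C + D).adjoint ⟨ContinuousLinearMap.adjoint (L n) v, h₁⟩ =
          (C.adjoint + D.adjoint) ⟨ContinuousLinearMap.adjoint (L n) v, h₂⟩)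
    (hRconv : ∀ x : H₀,
      Tendsto (fun n : ℕ => ContinuousLinearMap.adjoint (R n) x) atTop (𝓝 x))
    (hLconv : ∀ v : H₁,
      Tendsto (fun n : ℕ => ContinuousLinearMap.adjoint (L n) v) atTop (𝓝 v))
    (hTconv : ∀ v : H₁,
      Tendsto (fun n : ℕ => ContinuousLinearMap.adjoint (T n) v) atTop (𝓝 0)) :
    (C.adjoint + D.adjoint).closure = (C + D).adjoint :=
  closure_adjoint_sum_eq_adjoint_general C D hCdense hDdense hdense L R hR T hT hsum hRconv hLconv
    hTconv
end

section
/- Let H be a Hilbert space, D a skew-selfadjoint operator on H, A a skew-selfadjoint operator on H, and R_ε, L_ε ∈ L(H) families of bounded operators (ε > 0 small) such that: ran(R_ε) ⊆ dom(D), R_ε[dom(A)] ⊆ dom(A), L_ε A ⊆ A L_ε on dom(A), (D + A)* L_ε* = −(D + A) L_ε*, L_ε* → 1 and R_ε* → 1 strongly as ε → 0, and the transmutators [L_ε, D + A, R_ε] are continuous with [L_ε, D + A, R_ε]* → 0 strongly. Then D + A (with domain dom(D) ∩ dom(A)) is essentially skew-selfadjoint: cl(D + A) = −(D + A)*. -/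
open Filter Topology

open scoped RealInnerProductSpace

noncomputable section

/-- abstract essential skew-selfadjointness of the sum of two
skew-selfadjoint operators `D` and `A`, given regularising families `L_ε, R_ε` with the
listed properties: `cl(D + A) = -(D + A)*`. -/
theorem sum_essentially_skewSelfadjoint
    {H : Type*} [NormedAddCommGroup H] [InnerProductSpace ℝ H] [CompleteSpace H]
    (D A : H →ₗ.[ℝ] H)
    (hDdense : Dense (D.domain : Set H)) (hAdense : Dense (A.domain : Set H))
    (hdense : Dense (((D + A).domain : Submodule ℝ H) : Set H))
    (hDskew : D.adjoint = -D) (hAskew : A.adjoint = -A)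
    (ε₀ : ℝ) (hε₀ : 0 < ε₀)
    (L R : ℝ → H →L[ℝ] H)
    (hran : ∀ ε ∈ Set.Ioc (0 : ℝ) ε₀, ∀ x : H, R ε x ∈ D.domain)
    (hRA : ∀ ε ∈ Set.Ioc (0 : ℝ) ε₀, ∀ x ∈ A.domain, R ε x ∈ A.domain)
    (hRsum : ∀ ε ∈ Set.Ioc (0 : ℝ) ε₀, ∀ x ∈ (D + A).domain, R ε x ∈ (D + A).domain)
    (hLA : ∀ ε ∈ Set.Ioc (0 : ℝ) ε₀, ∀ x : A.domain,
      ∃ h : L ε (x : H) ∈ A.domain, A ⟨L ε (x : H), h⟩ = L ε (A x))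
    (hLconv : ∀ x : H,
      Tendsto (fun ε : ℝ => ContinuousLinearMap.adjoint (L ε) x) (𝓝[>] (0 : ℝ)) (𝓝 x))
    (hRconv : ∀ x : H,
      Tendsto (fun ε : ℝ => ContinuousLinearMap.adjoint (R ε) x) (𝓝[>] (0 : ℝ)) (𝓝 x))
    (T : ℝ → H →L[ℝ] H)
    (hT : ∀ ε : ℝ, ∀ hε : ε ∈ Set.Ioc (0 : ℝ) ε₀, ∀ x : (D + A).domain,
      T ε (x : H) = L ε ((D + A) x) - (D + A) ⟨R ε (x : H), hRsum ε hε (x : H) x.2⟩)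
    (hTconv : ∀ x : H,
      Tendsto (fun ε : ℝ => ContinuousLinearMap.adjoint (T ε) x) (𝓝[>] (0 : ℝ)) (𝓝 0))
    (hadj : ∀ ε ∈ Set.Ioc (0 : ℝ) ε₀, ∀ v : H,
      ((ContinuousLinearMap.adjoint (L ε) v ∈ (D + A).adjoint.domain) ↔
        (ContinuousLinearMap.adjoint (L ε) v ∈ (D + A).domain)) ∧
      ∀ (h₁ : ContinuousLinearMap.adjoint (L ε) v ∈ (D + A).adjoint.domain)
        (h₂ : ContinuousLinearMap.adjoint (L ε) v ∈ (D + A).domain),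
        (D + A).adjoint ⟨ContinuousLinearMap.adjoint (L ε) v, h₁⟩ =
          -((D + A) ⟨ContinuousLinearMap.adjoint (L ε) v, h₂⟩)) :
    (D + A).IsClosable ∧ (D + A).closure = -(D + A).adjoint := by
  classical
  have hε₀m : Set.Ioc (0 : ℝ) ε₀ ∈ 𝓝[>] (0 : ℝ) := Ioc_mem_nhdsGT hε₀
  -- the fundamental property of the adjoint of `D + A`
  have hfa := LinearPMap.adjoint_isFormalAdjoint (T := D + A) hdense
  -- skew-symmetry of `D` and `A` on their domains
  have hDfa := LinearPMap.adjoint_isFormalAdjoint (T := D) hDdense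
  rw [hDskew] at hDfa
  have hAfa := LinearPMap.adjoint_isFormalAdjoint (T := A) hAdense
  rw [hAskew] at hAfa
  have hDsk : ∀ (x y : H) (hx : x ∈ D.domain) (hy : y ∈ D.domain),
      ⟪(D ⟨x, hx⟩ : H), y⟫ = -⟪x, (D ⟨y, hy⟩ : H)⟫ := by
    intro x y hx hy
    have h : ⟪(-(D ⟨x, hx⟩ : H) : H), y⟫ = ⟪x, (D ⟨y, hy⟩ : H)⟫ :=
      hDfa ⟨x, hx⟩ ⟨y, hy⟩
    rw [inner_neg_left] at h
    linarith
  have hAsk : ∀ (x y : H) (hx : x ∈ A.domain) (hy : y ∈ A.domain),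
      ⟪(A ⟨x, hx⟩ : H), y⟫ = -⟪x, (A ⟨y, hy⟩ : H)⟫ := by
    intro x y hx hy
    have h : ⟪(-(A ⟨x, hx⟩ : H) : H), y⟫ = ⟪x, (A ⟨y, hy⟩ : H)⟫ :=
      hAfa ⟨x, hx⟩ ⟨y, hy⟩
    rw [inner_neg_left] at h
    linarith
  -- skew-symmetry of `D + A`
  have hSsk : ∀ x y : (D + A).domain,
      ⟪((D + A) x : H), (y : H)⟫ = -⟪(x : H), ((D + A) y : H)⟫ := by
    intro x y
    have ex : ((D + A) x : H) = (D ⟨(x : H), x.2.1⟩ : H) + (A ⟨(x : H), x.2.2⟩ : H) := rfl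
    have ey : ((D + A) y : H) = (D ⟨(y : H), y.2.1⟩ : H) + (A ⟨(y : H), y.2.2⟩ : H) := rfl
    rw [ex, ey, inner_add_left, inner_add_right,
      hDsk (x : H) (y : H) x.2.1 y.2.1, hAsk (x : H) (y : H) x.2.2 y.2.2]
    ring
  -- the graph of `-(D + A).adjoint` as a closed set
  have hPgraph : ((-(D + A).adjoint).graph : Set (H × H)) =
      {p : H × H | ∀ u : (D + A).domain, ⟪p.2, (u : H)⟫ = -⟪p.1, ((D + A) u : H)⟫} := by
    ext p
    constructor
    · intro hp
      rcases (LinearPMap.mem_graph_iff _).mp hp with ⟨y, hy1, hy2⟩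
      intro u
      have hfa' : ⟪((D + A).adjoint ⟨(y : H), y.2⟩ : H), (u : H)⟫
          = ⟪(y : H), ((D + A) u : H)⟫ := hfa ⟨(y : H), y.2⟩ u
      have hval : ((-(D + A).adjoint) y : H) = -((D + A).adjoint ⟨(y : H), y.2⟩ : H) := rfl
      rw [← hy1, ← hy2, hval, inner_neg_left, hfa']
    · intro hp
      have hex : ∀ u : (D + A).domain, ⟪-p.2, (u : H)⟫ = ⟪p.1, ((D + A) u : H)⟫ := by
        intro u
        rw [inner_neg_left, hp u]
        ring
      have hmem : p.1 ∈ (D + A).adjoint.domain :=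
        LinearPMap.mem_adjoint_domain_of_exists _ ⟨-p.2, hex⟩
      have happ : (D + A).adjoint ⟨p.1, hmem⟩ = -p.2 :=
        LinearPMap.adjoint_apply_eq hdense _ hex
      have hg := LinearPMap.mem_graph (-(D + A).adjoint) ⟨p.1, hmem⟩
      have hv : ((-(D + A).adjoint) ⟨p.1, hmem⟩ : H) = p.2 := by
        show -((D + A).adjoint ⟨p.1, hmem⟩ : H) = p.2
        rw [happ, neg_neg]
      rw [hv] at hg
      simpa using hg
  have hPclosed : IsClosed ((( -(D + A).adjoint).graph : Submodule ℝ (H × H)) : Set (H × H)) := by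
    rw [hPgraph]
    have heq : {p : H × H | ∀ u : (D + A).domain, ⟪p.2, (u : H)⟫ = -⟪p.1, ((D + A) u : H)⟫}
        = ⋂ u : (D + A).domain,
          {p : H × H | ⟪p.2, (u : H)⟫ = -⟪p.1, ((D + A) u : H)⟫} := by
      ext p
      simp [Set.mem_iInter]
    rw [heq]
    exact isClosed_iInter fun u => isClosed_eq
      (Continuous.inner continuous_snd continuous_const)
      (Continuous.neg (Continuous.inner continuous_fst continuous_const))
  -- every element of the adjoint's domain is reachable through the regularisers
  have hkey : ∀ (v : H) (hv : v ∈ (D + A).adjoint.domain),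
      (v, -((D + A).adjoint ⟨v, hv⟩ : H)) ∈ closure (((D + A).graph : Submodule ℝ (H × H)) : Set (H × H)) := by
    intro v hv
    set w : H := ((D + A).adjoint ⟨v, hv⟩ : H) with hw
    have step : ∀ ε ∈ Set.Ioc (0 : ℝ) ε₀,
        ((ContinuousLinearMap.adjoint (L ε) v,
          -(ContinuousLinearMap.adjoint (T ε) v + ContinuousLinearMap.adjoint (R ε) w)) : H × H)
          ∈ (((D + A).graph : Submodule ℝ (H × H)) : Set (H × H)) := by
      intro ε hε
      have key : ∀ u : (D + A).domain,
          ⟪ContinuousLinearMap.adjoint (T ε) v + ContinuousLinearMap.adjoint (R ε) w, (u : H)⟫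
            = ⟪ContinuousLinearMap.adjoint (L ε) v, ((D + A) u : H)⟫ := by
        intro u
        have hL : L ε ((D + A) u : H)
            = T ε (u : H) + ((D + A) ⟨R ε (u : H), hRsum ε hε (u : H) u.2⟩ : H) := by
          rw [hT ε hε u]
          abel
        have h2 : ⟪w, R ε (u : H)⟫
            = ⟪v, ((D + A) ⟨R ε (u : H), hRsum ε hε (u : H) u.2⟩ : H)⟫ :=
          hfa ⟨v, hv⟩ ⟨R ε (u : H), hRsum ε hε (u : H) u.2⟩
        rw [inner_add_left, ContinuousLinearMap.adjoint_inner_left,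
          ContinuousLinearMap.adjoint_inner_left, h2, ← inner_add_right, ← hL,
          ContinuousLinearMap.adjoint_inner_left]
      have hmem₁ : ContinuousLinearMap.adjoint (L ε) v ∈ (D + A).adjoint.domain :=
        LinearPMap.mem_adjoint_domain_of_exists _ ⟨_, key⟩
      have happ₁ : (D + A).adjoint ⟨ContinuousLinearMap.adjoint (L ε) v, hmem₁⟩
          = ContinuousLinearMap.adjoint (T ε) v + ContinuousLinearMap.adjoint (R ε) w :=
        LinearPMap.adjoint_apply_eq hdense _ key
      have hmem₂ : ContinuousLinearMap.adjoint (L ε) v ∈ (D + A).domain :=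
        ((hadj ε hε v).1).mp hmem₁
      have happ₂ := (hadj ε hε v).2 hmem₁ hmem₂
      rw [happ₂] at happ₁
      have hval : ((D + A) ⟨ContinuousLinearMap.adjoint (L ε) v, hmem₂⟩ : H)
          = -(ContinuousLinearMap.adjoint (T ε) v + ContinuousLinearMap.adjoint (R ε) w) :=
        neg_eq_iff_eq_neg.mp happ₁
      have hg := (D + A).mem_graph ⟨ContinuousLinearMap.adjoint (L ε) v, hmem₂⟩
      rw [hval] at hg
      exact hg
    have hlim : Tendsto (fun ε : ℝ => ((ContinuousLinearMap.adjoint (L ε) v,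
        -(ContinuousLinearMap.adjoint (T ε) v + ContinuousLinearMap.adjoint (R ε) w)) : H × H))
        (𝓝[>] (0 : ℝ)) (𝓝 (v, -w)) := by
      have h2 := ((hTconv v).add (hRconv w)).neg
      rw [zero_add] at h2
      exact (hLconv v).prodMk_nhds h2
    exact mem_closure_of_tendsto hlim (Filter.eventually_of_mem hε₀m step)
  -- the graph of `D + A` is contained in that of `-(D + A).adjoint`
  have hsub : (D + A).graph ≤ (-(D + A).adjoint).graph := by
    intro p hp
    have hp' : p ∈ ((-(D + A).adjoint).graph : Set (H × H)) := by
      rw [hPgraph]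
      rcases (LinearPMap.mem_graph_iff _).mp hp with ⟨y, hy1, hy2⟩
      intro u
      rw [← hy1, ← hy2]
      exact hSsk y u
    exact hp'
  -- the two graphs coincide after closure
  have hgraphEq : (D + A).graph.topologicalClosure = (-(D + A).adjoint).graph := by
    apply le_antisymm
    · exact Submodule.topologicalClosure_minimal _ hsub hPclosed
    · intro p hp
      obtain ⟨p1, p2⟩ := p
      rcases (LinearPMap.mem_graph_iff _).mp hp with ⟨y, hy1, hy2⟩
      have hy2' : -((D + A).adjoint ⟨(y : H), y.2⟩ : H) = p2 := hy2
      have hy1' : (y : H) = p1 := hy1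
      rw [← SetLike.mem_coe, Submodule.topologicalClosure_coe, ← hy1', ← hy2']
      exact hkey (y : H) y.2
  have hclosable : (D + A).IsClosable := ⟨-(D + A).adjoint, hgraphEq⟩
  refine ⟨hclosable, ?_⟩
  apply LinearPMap.eq_of_eq_graph
  rw [← hclosable.graph_closure_eq_closure_graph]
  exact hgraphEq
end
end

section
/- Let H be a Hilbert space, U ⊆ H a closed subspace with inclusion ι_U : U → H, and A : dom(A) ⊆ H → H, B : dom(B) ⊆ U → U densely defined closed operators. Let S ∈ L(H) with ran(S), ran(S*) ⊆ U, S[dom(A)] ⊆ dom(A) and [S,A] continuous, and assume A* leaves U invariant in the sense that A*S*v ∈ U for v ∈ dom(A*). Suppose there exists E : dom(B) → dom(A) with ι_U* E x = x and ι_U* A E x = B x for all x ∈ dom(B). Then for every v ∈ dom(A*): ι_U* S* v ∈ dom(B*) and B* ι_U* S* v = ι_U* A* S* v. -/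
open LinearPMap Submodule
open scoped InnerProductSpace

section Compression

variable {𝕜 H : Type*} [RCLike 𝕜] [NormedAddCommGroup H] [InnerProductSpace 𝕜 H] [CompleteSpace H]
  {U : Submodule 𝕜 H} {A : H →ₗ.[𝕜] H} {B : U →ₗ.[𝕜] U} {E : B.domain → A.domain}

/-- Since `w` and `A* w` lie in `U`, they do not see the component of `E x` orthogonal to `U`,
and up to that component `E` intertwines `B` with `A`. -/
theorem inner_orthogonalProjectionOnto_adjoint_apply [U.HasOrthogonalProjection]
    (hE₁ : ∀ x, U.orthogonalProjectionOnto (E x : H) = x)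
    (hE₂ : ∀ x, U.orthogonalProjectionOnto (A (E x)) = B x)
    (hA : Dense (A.domain : Set H)) (w : A†.domain) (hw : (w : H) ∈ U) (hAw : A† w ∈ U)
    (x : B.domain) :
    ⟪U.orthogonalProjectionOnto (A† w), (x : U)⟫_𝕜 = ⟪U.orthogonalProjectionOnto (w : H), B x⟫_𝕜 := by
  have hAwx : ⟪(⟨A† w, hAw⟩ : U), U.orthogonalProjectionOnto (E x : H)⟫_𝕜 = ⟪A† w, (E x : H)⟫_𝕜 :=
    inner_orthogonalProjectionOnto_eq_of_mem_left _ _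
  have hwBx : ⟪(⟨w, hw⟩ : U), U.orthogonalProjectionOnto (A (E x))⟫_𝕜 = ⟪(w : H), A (E x)⟫_𝕜 :=
    inner_orthogonalProjectionOnto_eq_of_mem_left _ _
  rw [hE₁] at hAwx
  rw [hE₂, ← orthogonalProjectionOnto_mem_subspace_eq_self ⟨(w : H), hw⟩] at hwBx
  rw [inner_orthogonalProjectionOnto_eq_of_mem_right, hwBx, ← adjoint_isFormalAdjoint hA w (E x),
    ← hAwx]
  rfl

theorem orthogonalProjectionOnto_mem_adjoint_domain [CompleteSpace U]
    (hE₁ : ∀ x, U.orthogonalProjectionOnto (E x : H) = x)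
    (hE₂ : ∀ x, U.orthogonalProjectionOnto (A (E x)) = B x)
    (hA : Dense (A.domain : Set H)) (hB : Dense (B.domain : Set U))
    (w : A†.domain) (hw : (w : H) ∈ U) (hAw : A† w ∈ U) :
    ∃ hmem : U.orthogonalProjectionOnto (w : H) ∈ B†.domain,
      B† ⟨U.orthogonalProjectionOnto (w : H), hmem⟩ = U.orthogonalProjectionOnto (A† w) := by
  have hformal := inner_orthogonalProjectionOnto_adjoint_apply hE₁ hE₂ hA w hw hAw
  have hmem := B.mem_adjoint_domain_of_exists _ ⟨_, hformal⟩
  exact ⟨hmem, adjoint_apply_eq hB ⟨_, hmem⟩ hformal⟩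

end Compression

theorem localisation_extension_lemma_general
    {H : Type*} [NormedAddCommGroup H] [InnerProductSpace ℝ H] [CompleteSpace H]
    (U : Submodule ℝ H) [CompleteSpace U]
    (A : H →ₗ.[ℝ] H) (B : U →ₗ.[ℝ] U)
    (hAdense : Dense (A.domain : Set H))
    (hBdense : Dense (B.domain : Set U))
    (S : H →L[ℝ] H)
    (hranS' : ∀ x : H, ContinuousLinearMap.adjoint S x ∈ U)
    (hAstarU : ∀ v : A.adjoint.domain,
      ∃ h : ContinuousLinearMap.adjoint S (v : H) ∈ A.adjoint.domain,
        A.adjoint ⟨ContinuousLinearMap.adjoint S (v : H), h⟩ ∈ U)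
    (E : B.domain → A.domain)
    (hE₁ : ∀ x : B.domain, Submodule.orthogonalProjectionOnto U ((E x : H)) = x)
    (hE₂ : ∀ x : B.domain, Submodule.orthogonalProjectionOnto U (A (E x)) = B x) :
    ∀ v : A.adjoint.domain,
      ∃ (hSv : ContinuousLinearMap.adjoint S (v : H) ∈ A.adjoint.domain)
        (hmem : Submodule.orthogonalProjectionOnto U (ContinuousLinearMap.adjoint S (v : H)) ∈
          B.adjoint.domain),
        B.adjoint ⟨Submodule.orthogonalProjectionOnto U (ContinuousLinearMap.adjoint S (v : H)), hmem⟩ =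
          Submodule.orthogonalProjectionOnto U
            (A.adjoint ⟨ContinuousLinearMap.adjoint S (v : H), hSv⟩) := by
  intro v
  obtain ⟨hSv, hAU⟩ := hAstarU v
  exact ⟨hSv, orthogonalProjectionOnto_mem_adjoint_domain hE₁ hE₂ hAdense hBdense
    ⟨_, hSv⟩ (hranS' v) hAU⟩

/-- localisation lemma. `U` a closed subspace of `H` with inclusion `ι_U`
(and `ι_U* = ` orthogonal projection onto `U`), `A` on `H` and `B` on `U` densely defined
closed, `S` bounded with ranges of `S, S*` in `U`, `S` leaving `dom A` invariant with
continuous commutator `[S,A]`, `A*` leaving `U` invariant (`A*S*v ∈ U`), and `E` an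
extension operator with `ι_U* E x = x`, `ι_U* A E x = B x`. Then for every `v ∈ dom A*`:
`ι_U* S* v ∈ dom B*` and `B* ι_U* S* v = ι_U* A* S* v`. -/
theorem localisation_extension_lemma
    {H : Type*} [NormedAddCommGroup H] [InnerProductSpace ℝ H] [CompleteSpace H]
    (U : Submodule ℝ H) (hU : IsClosed (U : Set H)) [CompleteSpace U]
    (A : H →ₗ.[ℝ] H) (B : U →ₗ.[ℝ] U)
    (hAdense : Dense (A.domain : Set H)) (hAclosed : A.IsClosed)
    (hBdense : Dense (B.domain : Set U)) (hBclosed : B.IsClosed)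
    (S : H →L[ℝ] H)
    (hranS : ∀ x : H, S x ∈ U)
    (hranS' : ∀ x : H, ContinuousLinearMap.adjoint S x ∈ U)
    (hSA : ∀ x ∈ A.domain, S x ∈ A.domain)
    (T : H →L[ℝ] H)
    (hT : ∀ x : A.domain, T (x : H) = S (A x) - A ⟨S (x : H), hSA x x.2⟩)
    (hAstarU : ∀ v : A.adjoint.domain,
      ∃ h : ContinuousLinearMap.adjoint S (v : H) ∈ A.adjoint.domain,
        A.adjoint ⟨ContinuousLinearMap.adjoint S (v : H), h⟩ ∈ U)
    (E : B.domain → A.domain)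
    (hE₁ : ∀ x : B.domain, Submodule.orthogonalProjectionOnto U ((E x : H)) = x)
    (hE₂ : ∀ x : B.domain, Submodule.orthogonalProjectionOnto U (A (E x)) = B x) :
    ∀ v : A.adjoint.domain,
      ∃ (hSv : ContinuousLinearMap.adjoint S (v : H) ∈ A.adjoint.domain)
        (hmem : Submodule.orthogonalProjectionOnto U (ContinuousLinearMap.adjoint S (v : H)) ∈
          B.adjoint.domain),
        B.adjoint ⟨Submodule.orthogonalProjectionOnto U (ContinuousLinearMap.adjoint S (v : H)), hmem⟩ =
          Submodule.orthogonalProjectionOnto U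
            (A.adjoint ⟨ContinuousLinearMap.adjoint S (v : H), hSv⟩) :=
  localisation_extension_lemma_general U A B hAdense hBdense S hranS' hAstarU E hE₁ hE₂
end
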